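/- Let q ≥ 5 be an odd prime power with q ≡ -1 (mod 3). Then there is exactly one β ∈ F_q for which the cubic polynomial t³ - 3βt² - 1 has exactly two roots in F_q, and there are exactly (q-1)/2 elements β ∈ F_q for which it has exactly one root in F_q. -/

import Mathlib

/-!
A root `t` of `t³ - 3βt² - 1` is nonzero and determines `β = (t³ - 1) / (3t²)`; the other roots
are those of `t²s² + s + t`, of discriminant `1 - 4t³`. So the cubic has a single root exactly when
it has a root `t` with `1 - 4t³` a nonsquare, and then `β` determines `t`. As `q ≡ 2 (mod 3)`,
cubing is a bijection of `F_q`, hence so is `t ↦ 1 - 4t³`, and these `β` are as many as the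
nonsquares, `(q - 1) / 2`. The cubic has exactly two roots when it has a double root; since the
roots multiply to `1` this forces `t³ - 3βt² - 1 = (t - 2β)²(t + β)`, i.e. `4β³ = -1`, which
again by bijectivity of cubing has exactly one solution.
-/

open Function

theorem Set.ncard_preimage_of_injective_of_finite {α : Type*} [Finite α] {f : α → α}
    (hf : Injective f) (s : Set α) : (f ⁻¹' s).ncard = s.ncard :=
  Set.ncard_preimage_of_injective_subset_range hf
    (by simp [(Finite.injective_iff_surjective.1 hf).range_eq])

namespace FiniteField

variable {F : Type*} [Field F] [Fintype F]

theorem natCast_ne_zero_of_not_dvd_card (p : ℕ) [Fact p.Prime] (h : ¬p ∣ Fintype.card F) :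
    (p : F) ≠ 0 :=
  ((isUnit_iff_not_dvd_char F p).2 (mt (prime_dvd_char_iff_dvd_card p).1 h)).ne_zero

theorem pow_injective_of_coprime {n : ℕ} (hn : n ≠ 0) (hcop : (Fintype.card F - 1).Coprime n) :
    Injective (fun x : F => x ^ n) := by
  classical
  intro x y hxy
  simp only at hxy
  rcases eq_or_ne x 0 with rfl | hx
  · exact ((pow_eq_zero_iff hn).1 (hxy.symm.trans (zero_pow hn))).symm
  rcases eq_or_ne y 0 with rfl | hy
  · exact (pow_eq_zero_iff hn).1 (hxy.trans (zero_pow hn))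
  rw [← Fintype.card_units, ← Nat.card_eq_fintype_card] at hcop
  have := hcop.pow_left_bijective.injective (a₁ := Units.mk0 x hx) (a₂ := Units.mk0 y hy)
    (Units.ext (by simpa using hxy))
  simpa using congrArg Units.val this

theorem two_mul_ncard_nonsquares_add_one (hF : ringChar F ≠ 2) :
    2 * {a : F | ¬IsSquare a}.ncard + 1 = Fintype.card F := by
  classical
  have hχ (a : F) : quadraticChar F a =
      1 - 2 * (if ¬IsSquare a then 1 else 0) - (if a = 0 then 1 else 0) := by
    by_cases ha : a = 0
    · simp [ha]
    by_cases hsq : IsSquare a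
    · simp [ha, hsq, (quadraticChar_one_iff_isSquare ha).2 hsq]
    · simp [ha, hsq, quadraticChar_neg_one_iff_not_isSquare.2 hsq]
  have hsum := quadraticChar_sum_zero hF
  simp only [hχ, Finset.sum_sub_distrib, ← Finset.mul_sum, Finset.sum_boole] at hsum
  rw [Set.ncard_eq_toFinset_card']
  have h0 : (Finset.univ.filter (fun x : F => x = 0)).card = 1 := by
    rw [Finset.card_eq_one]; exact ⟨0, by ext; simp⟩
  simp [h0] at hsum ⊢
  omega

end FiniteField

section Cubic

variable {F : Type*} [Field F] {β s t : F}

def cubicRoots (β : F) : Set F := {t | t ^ 3 - 3 * β * t ^ 2 - 1 = 0}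

def cubicParam (t : F) : F := (t ^ 3 - 1) / (3 * t ^ 2)

theorem mem_cubicRoots : t ∈ cubicRoots β ↔ t ^ 3 - 3 * β * t ^ 2 - 1 = 0 := Iff.rfl

theorem ne_zero_of_mem_cubicRoots (ht : t ∈ cubicRoots β) : t ≠ 0 := by
  rintro rfl
  norm_num [mem_cubicRoots] at ht

theorem mem_cubicRoots_iff_eq_cubicParam (h3 : (3 : F) ≠ 0) (ht : t ≠ 0) :
    t ∈ cubicRoots β ↔ β = cubicParam t := by
  rw [mem_cubicRoots, cubicParam, eq_div_iff (by positivity)]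
  constructor <;> intro h <;> linear_combination -h

theorem mem_cubicRoots_iff_of_mem (ht : t ∈ cubicRoots β) :
    s ∈ cubicRoots β ↔ s = t ∨ t ^ 2 * s ^ 2 + s + t = 0 := by
  have key : t ^ 2 * (s ^ 3 - 3 * β * s ^ 2 - 1) = (s - t) * (t ^ 2 * s ^ 2 + s + t) := by
    linear_combination s ^ 2 * mem_cubicRoots.1 ht
  rw [mem_cubicRoots, ← mul_right_inj' (pow_ne_zero 2 (ne_zero_of_mem_cubicRoots ht)), key,
    mul_zero, mul_eq_zero, sub_eq_zero]

theorem cubicRoots_eq_singleton (ht : t ∈ cubicRoots β) (hns : ¬IsSquare (1 - 4 * t ^ 3)) :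
    cubicRoots β = {t} := by
  ext s
  rw [mem_cubicRoots_iff_of_mem ht, Set.mem_singleton_iff, or_iff_left_iff_imp]
  exact fun hq ↦ (hns ⟨2 * t ^ 2 * s + 1, by linear_combination (-4 * t ^ 2) * hq⟩).elim

theorem exists_ne_mem_cubicRoots (h2 : (2 : F) ≠ 0) (h3 : (3 : F) ≠ 0) (ht : t ∈ cubicRoots β)
    (hsq : IsSquare (1 - 4 * t ^ 3)) : ∃ s ≠ t, s ∈ cubicRoots β := by
  have ht0 := ne_zero_of_mem_cubicRoots ht
  have : NeZero (2 : F) := ⟨h2⟩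
  obtain ⟨c, hc⟩ := hsq
  obtain ⟨s, hs⟩ := exists_quadratic_eq_zero (b := 1) (c := t) (pow_ne_zero 2 ht0)
    ⟨c, by rw [discrim]; linear_combination hc⟩
  have hq : t ^ 2 * s ^ 2 + s + t = 0 := by linear_combination hs
  rcases ne_or_eq s t with hst | rfl
  · exact ⟨s, hst, (mem_cubicRoots_iff_of_mem ht).2 (Or.inr hq)⟩
  -- `s` is a double root of the cubic, so `s³ = -2` and the other root `1/s²` differs from `s`.
  have hs3 : s ^ 3 + 2 = 0 :=
    (mul_eq_zero.1 (by linear_combination hq : s * (s ^ 3 + 2) = 0)).resolve_left ht0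
  refine ⟨(s ^ 2)⁻¹, fun h ↦ h3 ?_, (mem_cubicRoots_iff_of_mem ht).2 (Or.inr ?_)⟩
  · field_simp at h
    linear_combination h + hs3
  · field_simp
    linear_combination hs3

theorem ncard_cubicRoots_eq_one_iff (h2 : (2 : F) ≠ 0) (h3 : (3 : F) ≠ 0) :
    (cubicRoots β).ncard = 1 ↔ ∃ t ∈ cubicRoots β, ¬IsSquare (1 - 4 * t ^ 3) := by
  constructor
  · intro h
    obtain ⟨t, ht⟩ := Set.ncard_eq_one.1 h
    have htR : t ∈ cubicRoots β := by rw [ht]; exact Set.mem_singleton t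
    refine ⟨t, htR, fun hsq ↦ ?_⟩
    obtain ⟨s, hst, hs⟩ := exists_ne_mem_cubicRoots h2 h3 htR hsq
    rw [ht] at hs
    exact hst hs
  · rintro ⟨t, ht, hns⟩
    rw [cubicRoots_eq_singleton ht hns, Set.ncard_singleton]

theorem ne_zero_of_not_isSquare_one_sub (hns : ¬IsSquare (1 - 4 * t ^ 3)) : t ≠ 0 := by
  rintro rfl
  exact hns ⟨1, by ring⟩

theorem setOf_ncard_cubicRoots_eq_one (h2 : (2 : F) ≠ 0) (h3 : (3 : F) ≠ 0) :
    {β : F | (cubicRoots β).ncard = 1} = cubicParam '' {t | ¬IsSquare (1 - 4 * t ^ 3)} := by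
  ext β
  rw [Set.mem_ofPred_eq, ncard_cubicRoots_eq_one_iff h2 h3, Set.mem_image]
  refine exists_congr fun t ↦ ⟨fun ⟨ht, hns⟩ ↦ ⟨hns, ?_⟩, fun ⟨hns, hβ⟩ ↦ ⟨?_, hns⟩⟩
  · exact ((mem_cubicRoots_iff_eq_cubicParam h3 (ne_zero_of_mem_cubicRoots ht)).1 ht).symm
  · exact (mem_cubicRoots_iff_eq_cubicParam h3 (ne_zero_of_not_isSquare_one_sub hns)).2 hβ.symm

theorem injOn_cubicParam (h3 : (3 : F) ≠ 0) :
    Set.InjOn (cubicParam : F → F) {t | ¬IsSquare (1 - 4 * t ^ 3)} := by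
  have hmem {t : F} (hns : ¬IsSquare (1 - 4 * t ^ 3)) : t ∈ cubicRoots (cubicParam t) :=
    (mem_cubicRoots_iff_eq_cubicParam h3 (ne_zero_of_not_isSquare_one_sub hns)).2 rfl
  intro t ht t' ht' h
  have := hmem ht'
  rw [← h, cubicRoots_eq_singleton (hmem ht) ht] at this
  exact this.symm

theorem cubicRoots_eq_pair (h : 4 * β ^ 3 + 1 = 0) : cubicRoots β = {2 * β, -β} := by
  ext t
  have key : t ^ 3 - 3 * β * t ^ 2 - 1 = (t - 2 * β) ^ 2 * (t + β) := by linear_combination -h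
  rw [mem_cubicRoots, key, mul_eq_zero, pow_eq_zero_iff two_ne_zero, sub_eq_zero,
    add_eq_zero_iff_eq_neg, Set.mem_insert_iff, Set.mem_singleton_iff]

/-- The product of the roots of the cubic is `1`, so `1/(ab)` is its third root. -/
theorem inv_mul_mem_cubicRoots {a b : F} (ha : a ∈ cubicRoots β) (hb : b ∈ cubicRoots β)
    (hab : a ≠ b) : (a * b)⁻¹ ∈ cubicRoots β := by
  have ha0 := ne_zero_of_mem_cubicRoots ha
  have hb0 := ne_zero_of_mem_cubicRoots hb
  have hq := ((mem_cubicRoots_iff_of_mem ha).1 hb).resolve_left hab.symm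
  refine (mem_cubicRoots_iff_of_mem hb).2 (Or.inr ?_)
  field_simp
  linear_combination hq

theorem four_mul_pow_three_add_one_eq_zero (h3 : (3 : F) ≠ 0) {a b : F} (ha : a ∈ cubicRoots β)
    (hb : b ∈ cubicRoots β) (hab : a ≠ b) (h : a * b ^ 2 = 1) : 4 * β ^ 3 + 1 = 0 := by
  have ha0 := ne_zero_of_mem_cubicRoots ha
  have hq := ((mem_cubicRoots_iff_of_mem ha).1 hb).resolve_left hab.symm
  have hba : b = -2 * a := by linear_combination hq - a * h
  have ha3 : 4 * a ^ 3 = 1 := by rw [hba] at h; linear_combination h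
  have hβ : β = -a := by
    have : 3 * a ^ 2 * (β + a) = 0 := by linear_combination -(mem_cubicRoots.1 ha) + ha3
    simpa [h3, ha0, add_eq_zero_iff_eq_neg] using this
  rw [hβ]
  linear_combination -ha3

theorem ncard_cubicRoots_eq_two_iff (h3 : (3 : F) ≠ 0) :
    (cubicRoots β).ncard = 2 ↔ 4 * β ^ 3 + 1 = 0 := by
  constructor
  · intro h
    obtain ⟨a, b, hab, hR⟩ := Set.ncard_eq_two.1 h
    have ha : a ∈ cubicRoots β := by rw [hR]; exact Set.mem_insert a _
    have hb : b ∈ cubicRoots β := by rw [hR]; exact Set.mem_insert_of_mem a rfl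
    have hc := inv_mul_mem_cubicRoots ha hb hab
    have hab0 : a * b ≠ 0 :=
      mul_ne_zero (ne_zero_of_mem_cubicRoots ha) (ne_zero_of_mem_cubicRoots hb)
    rw [hR, Set.mem_insert_iff, Set.mem_singleton_iff] at hc
    have hc1 := inv_mul_cancel₀ hab0
    rcases hc with hc | hc <;> rw [hc] at hc1
    · exact four_mul_pow_three_add_one_eq_zero h3 hb ha hab.symm (by linear_combination hc1)
    · exact four_mul_pow_three_add_one_eq_zero h3 ha hb hab (by linear_combination hc1)
  · intro h
    have hβ : β ≠ 0 := by rintro rfl; norm_num at h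
    rw [cubicRoots_eq_pair h, Set.ncard_pair]
    intro h'
    exact mul_ne_zero h3 hβ (by linear_combination h')

end Cubic

theorem stmt0 (q : ℕ) (hodd : Odd q) (hq3 : q % 3 = 2)
    (F : Type*) [Field F] [Fintype F] (hcard : Fintype.card F = q) :
    ({β : F | ({t : F | t ^ 3 - 3 * β * t ^ 2 - 1 = 0} : Set F).ncard = 2} : Set F).ncard = 1 ∧
    ({β : F | ({t : F | t ^ 3 - 3 * β * t ^ 2 - 1 = 0} : Set F).ncard = 1} : Set F).ncard
      = (q - 1) / 2 := by
  change {β : F | (cubicRoots β).ncard = 2}.ncard = 1 ∧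
    {β : F | (cubicRoots β).ncard = 1}.ncard = (q - 1) / 2
  have hchar : ringChar F ≠ 2 := by
    rw [Ne, FiniteField.even_card_iff_char_two, hcard, Nat.odd_iff.1 hodd]
    exact one_ne_zero
  have h2 : (2 : F) ≠ 0 := Ring.two_ne_zero hchar
  have h3 : (3 : F) ≠ 0 := by
    exact_mod_cast FiniteField.natCast_ne_zero_of_not_dvd_card (F := F) 3 (by omega)
  have h4 : (4 : F) ≠ 0 := by
    rw [show (4 : F) = 2 * 2 by norm_num]
    exact mul_ne_zero h2 h2
  have hcube : Injective (fun x : F ↦ x ^ 3) :=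
    FiniteField.pow_injective_of_coprime three_ne_zero <|
      ((Nat.Prime.coprime_iff_not_dvd Nat.prime_three).2 (by omega)).symm
  constructor
  · have hset : {β : F | (cubicRoots β).ncard = 2} = (fun β ↦ 4 * β ^ 3 + 1) ⁻¹' {0} :=
      Set.ext fun β ↦ ncard_cubicRoots_eq_two_iff h3
    rw [hset, Set.ncard_preimage_of_injective_of_finite, Set.ncard_singleton]
    exact fun x y h ↦ hcube (mul_left_cancel₀ h4 (add_right_cancel h))
  · rw [setOf_ncard_cubicRoots_eq_one h2 h3, (injOn_cubicParam h3).ncard_image]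
    have hset : {t : F | ¬IsSquare (1 - 4 * t ^ 3)} =
        (fun t ↦ 1 - 4 * t ^ 3) ⁻¹' {x | ¬IsSquare x} := rfl
    rw [hset, Set.ncard_preimage_of_injective_of_finite]
    · have := FiniteField.two_mul_ncard_nonsquares_add_one hchar
      omega
    · exact fun x y h ↦ hcube (mul_left_cancel₀ h4 (sub_right_injective h))
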